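/- arXiv:math/0108153 — 4 statements merged into one kernel-verified Lean document; each statement's English description precedes it below -/
import Mathlib

section
/- Let E be a real normed vector space, U ⊆ E an open set, ω a C¹ one-form on U that vanishes nowhere (ω(x) ≠ 0 for all x ∈ U), f : U → ℝ a C² function and λ : U → ℝ a function with λ(x) ≠ 0 for all x ∈ U, such that Df(x) = λ(x) • ω(x) for all x ∈ U (Euler's multiplier). Then ω satisfies the integrability condition ω ∧ dω = 0 on U, i.e. for all x ∈ U and all u, v, w ∈ E: ω(x)(u)·dω(x)(v,w) − ω(x)(v)·dω(x)(u,w) + ω(x)(w)·dω(x)(u,v) = 0. -/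
/-!
Near `x` the multiplier is `λ = Df(·) e / ω(·) e` for any `e` with `ω x e ≠ 0`, hence
differentiable at `x`. Differentiating `Df = λ • ω` and using the symmetry of the second
derivative of `f` gives `λ(x) • dω(x) = ω(x) ∧ Dλ(x)`, and wedging with `ω(x)` kills the
right-hand side; since `λ(x) ≠ 0` this is `ω ∧ dω = 0` at `x`.
-/

open Filter Topology

theorem wedge_antisymm_eq_zero_of_mul_antisymm_eq {ι K : Type*} [Field K]
    (φ m : ι → K) (B : ι → ι → K) {c : K} (hc : c ≠ 0)
    (h : ∀ a b, c * (B a b - B b a) = m b * φ a - m a * φ b) (u v w : ι) :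
    φ u * (B v w - B w v) - φ v * (B u w - B w u) + φ w * (B u v - B v u) = 0 := by
  have hc_mul : c * (φ u * (B v w - B w v) - φ v * (B u w - B w u)
      + φ w * (B u v - B v u)) = 0 := by
    linear_combination φ u * h v w - φ v * h u w + φ w * h u v
  exact (mul_eq_zero.mp hc_mul).resolve_left hc

section Multiplier

variable {𝕜 E F : Type*} [NontriviallyNormedField 𝕜]
  [NormedAddCommGroup E] [NormedSpace 𝕜 E] [NormedAddCommGroup F] [NormedSpace 𝕜 F]

theorem differentiableAt_of_eventuallyEq_smul {α ω : E → F →L[𝕜] 𝕜} {lam : E → 𝕜} {x : E}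
    (hα : DifferentiableAt 𝕜 α x) (hω : DifferentiableAt 𝕜 ω x) (hωx : ω x ≠ 0)
    (hαω : ∀ᶠ y in 𝓝 x, α y = lam y • ω y) : DifferentiableAt 𝕜 lam x := by
  obtain ⟨e, he⟩ : ∃ e, ω x e ≠ 0 := by simpa using DFunLike.ne_iff.mp hωx
  have hωe : DifferentiableAt 𝕜 (fun y => ω y e) x := hω.clm_apply (differentiableAt_const e)
  have hαe : DifferentiableAt 𝕜 (fun y => α y e) x := hα.clm_apply (differentiableAt_const e)
  have hωe_ne : ∀ᶠ y in 𝓝 x, ω y e ≠ 0 := hωe.continuousAt.eventually_ne he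
  refine (hαe.fun_mul (hωe.fun_inv he)).congr_of_eventuallyEq ?_
  filter_upwards [hαω, hωe_ne] with y hy hy_ne
  rw [hy, smul_apply, smul_eq_mul, mul_inv_cancel_right₀ hy_ne]

end Multiplier

theorem mul_fderiv_antisymm_eq_of_hasFDerivAt_smul {𝕜 E : Type*} [RCLike 𝕜]
    [NormedAddCommGroup E] [NormedSpace 𝕜 E] {f : E → 𝕜} {ω : E → E →L[𝕜] 𝕜} {lam : E → 𝕜}
    {x : E} (hf : ∀ᶠ y in 𝓝 x, HasFDerivAt f (lam y • ω y) y)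
    (hlam : DifferentiableAt 𝕜 lam x) (hω : DifferentiableAt 𝕜 ω x) (a b : E) :
    lam x * (fderiv 𝕜 ω x a b - fderiv 𝕜 ω x b a)
      = fderiv 𝕜 lam x b * ω x a - fderiv 𝕜 lam x a * ω x b := by
  have hsymm := second_derivative_symmetric_of_eventually hf
    (hlam.hasFDerivAt.smul hω.hasFDerivAt) a b
  simp only [add_apply, smul_apply,
    ContinuousLinearMap.smulRight_apply, smul_eq_mul] at hsymm
  linear_combination hsymm

/-- If `f` is a C² function, `ω` a nowhere vanishing C¹ one-form on an open set `U`,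
and `λ` a nowhere vanishing Euler multiplier with `Df = λ • ω` on `U`, then `ω`
satisfies the integrability condition `ω ∧ dω = 0` on `U`. -/
theorem euler_multiplier_implies_integrability
    {E : Type*} [NormedAddCommGroup E] [NormedSpace ℝ E]
    (U : Set E) (hU : IsOpen U)
    (ω : E → (E →L[ℝ] ℝ)) (hω : ContDiffOn ℝ 1 ω U)
    (hωne : ∀ x ∈ U, ω x ≠ 0)
    (f : E → ℝ) (hf : ContDiffOn ℝ 2 f U)
    (lam : E → ℝ) (hlam : ∀ x ∈ U, lam x ≠ 0)
    (heuler : ∀ x ∈ U, fderiv ℝ f x = lam x • ω x) :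
    ∀ x ∈ U, ∀ u v w : E,
      ω x u * ((fderiv ℝ ω x v) w - (fderiv ℝ ω x w) v)
        - ω x v * ((fderiv ℝ ω x u) w - (fderiv ℝ ω x w) u)
        + ω x w * ((fderiv ℝ ω x u) v - (fderiv ℝ ω x v) u) = 0 := by
  intro x hx
  have hUx : U ∈ 𝓝 x := hU.mem_nhds hx
  have hωx : DifferentiableAt ℝ ω x := (hω.differentiableOn one_ne_zero).differentiableAt hUx
  have hDfx : DifferentiableAt ℝ (fderiv ℝ f) x :=
    ((hf.fderiv_of_isOpen hU (by norm_num)).differentiableOn one_ne_zero).differentiableAt hUx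
  have hlamx : DifferentiableAt ℝ lam x :=
    differentiableAt_of_eventuallyEq_smul hDfx hωx (hωne x hx)
      (eventually_of_mem hUx heuler)
  have hf_deriv : ∀ᶠ y in 𝓝 x, HasFDerivAt f (lam y • ω y) y := by
    filter_upwards [hU.eventually_mem hx] with y hy
    rw [← heuler y hy]
    exact ((hf.differentiableOn two_ne_zero).differentiableAt (hU.mem_nhds hy)).hasFDerivAt
  exact wedge_antisymm_eq_zero_of_mul_antisymm_eq (ω x) (fderiv ℝ lam x)
    (fun a b => fderiv ℝ ω x a b) (hlam x hx)
    (mul_fderiv_antisymm_eq_of_hasFDerivAt_smul hf_deriv hlamx hωx)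
end

section
/- Let E be a real normed vector space, U ⊆ E an open set, ω a C¹ one-form on U, f : U → ℝ a C² function and λ : U → ℝ a C² function with λ(x) ≠ 0 for all x ∈ U, such that Df(x) = λ(x) • ω(x) for all x ∈ U. Then the C¹ one-form η defined by η(x) := λ(x)⁻¹ • Dλ(x) satisfies dω = ω ∧ η on U and dη = 0 on U; in particular the Godbillon–Vey integrand η ∧ dη vanishes identically on U. -/
/-!
Near a point of `U` the Euler relation gives `ω = λ⁻¹ • Df`, while `η = λ⁻¹ • Dλ`.
For any one-form `λ⁻¹ • DF` with `F` of class C², the symmetry of `D²F` kills the second-order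
term of its exterior derivative, leaving `d(λ⁻¹ • DF) = -λ⁻² Dλ ∧ DF`. With `F = f` this is
`ω ∧ η`; with `F = λ` it is `-λ⁻² Dλ ∧ Dλ = 0`. A closed `η` makes `η ∧ dη` vanish.
-/

open Filter Topology

section ExteriorDerivative

variable {𝕜 : Type*} [RCLike 𝕜] {E G : Type*} [NormedAddCommGroup E] [NormedSpace 𝕜 E]
  [NormedAddCommGroup G] [NormedSpace 𝕜 G]

theorem fderiv_inv_smul_fderiv_apply_sub_swap {lam : E → 𝕜} {F : E → G} {x : E}
    (hlam : DifferentiableAt 𝕜 lam x) (hlamx : lam x ≠ 0) (hF : ContDiffAt 𝕜 2 F x) (u v : E) :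
    fderiv 𝕜 (fun y => (lam y)⁻¹ • fderiv 𝕜 F y) x u v
        - fderiv 𝕜 (fun y => (lam y)⁻¹ • fderiv 𝕜 F y) x v u
      = -(lam x ^ 2)⁻¹ • (fderiv 𝕜 lam x u • fderiv 𝕜 F x v
          - fderiv 𝕜 lam x v • fderiv 𝕜 F x u) := by
  have hinv : HasFDerivAt (fun y => (lam y)⁻¹) (-(lam x ^ 2)⁻¹ • fderiv 𝕜 lam x) x :=
    (hasDerivAt_inv hlamx).comp_hasFDerivAt x hlam.hasFDerivAt
  have hDF : DifferentiableAt 𝕜 (fderiv 𝕜 F) x :=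
    (hF.fderiv_right (m := 1) le_rfl).differentiableAt one_ne_zero
  have hsymm : fderiv 𝕜 (fderiv 𝕜 F) x u v = fderiv 𝕜 (fderiv 𝕜 F) x v u :=
    hF.isSymmSndFDerivAt (by simp [minSmoothness_of_isRCLikeNormedField]) u v
  rw [fderiv_fun_smul hinv.differentiableAt hDF, hinv.fderiv]
  simp only [add_apply, smul_apply,
    ContinuousLinearMap.smulRight_apply, hsymm, smul_sub, smul_smul]
  abel

theorem fderiv_inv_smul_fderiv_self_apply_sub_swap {lam : E → 𝕜} {x : E}
    (hlamx : lam x ≠ 0) (hlam : ContDiffAt 𝕜 2 lam x) (u v : E) :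
    fderiv 𝕜 (fun y => (lam y)⁻¹ • fderiv 𝕜 lam y) x u v
      - fderiv 𝕜 (fun y => (lam y)⁻¹ • fderiv 𝕜 lam y) x v u = 0 := by
  rw [fderiv_inv_smul_fderiv_apply_sub_swap (hlam.differentiableAt two_ne_zero) hlamx hlam]
  simp only [smul_eq_mul, mul_comm (fderiv 𝕜 lam x u), sub_self, mul_zero]

end ExteriorDerivative

theorem godbillon_vey_integrand_vanishes_general
    {E : Type*} [NormedAddCommGroup E] [NormedSpace ℝ E]
    (U : Set E) (hU : IsOpen U)
    (ω : E → (E →L[ℝ] ℝ))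
    (f : E → ℝ) (hf : ContDiffOn ℝ 2 f U)
    (lam : E → ℝ) (hlam : ContDiffOn ℝ 2 lam U) (hlamne : ∀ x ∈ U, lam x ≠ 0)
    (heuler : ∀ x ∈ U, fderiv ℝ f x = lam x • ω x)
    (η : E → (E →L[ℝ] ℝ)) (hη : ∀ x, η x = (lam x)⁻¹ • fderiv ℝ lam x) :
    ∀ x ∈ U,
      (∀ u v : E,
        (fderiv ℝ ω x u) v - (fderiv ℝ ω x v) u
          = ω x u * η x v - ω x v * η x u) ∧
      (∀ u v : E, (fderiv ℝ η x u) v - (fderiv ℝ η x v) u = 0) ∧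
      (∀ u v w : E,
        η x u * ((fderiv ℝ η x v) w - (fderiv ℝ η x w) v)
          - η x v * ((fderiv ℝ η x u) w - (fderiv ℝ η x w) u)
          + η x w * ((fderiv ℝ η x u) v - (fderiv ℝ η x v) u) = 0) := by
  intro x hx
  have hxU : U ∈ 𝓝 x := hU.mem_nhds hx
  have hlamx : ContDiffAt ℝ 2 lam x := hlam.contDiffAt hxU
  have hω : ω =ᶠ[𝓝 x] fun y => (lam y)⁻¹ • fderiv ℝ f y := by
    filter_upwards [hxU] with y hy
    rw [heuler y hy, inv_smul_smul₀ (hlamne y hy)]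
  have hdη : ∀ u v : E, fderiv ℝ η x u v - fderiv ℝ η x v u = 0 := by
    rw [funext hη]
    exact fderiv_inv_smul_fderiv_self_apply_sub_swap (hlamne x hx) hlamx
  refine ⟨fun u v => ?_, hdη, fun u v w => ?_⟩
  · rw [hω.fderiv_eq, fderiv_inv_smul_fderiv_apply_sub_swap (hlamx.differentiableAt two_ne_zero)
      (hlamne x hx) (hf.contDiffAt hxU), heuler x hx, hη x]
    simp only [smul_apply, smul_eq_mul]
    field_simp [hlamne x hx]
    ring
  · rw [hdη u v, hdη u w, hdη v w]
    ring

/-- If `Df = λ • ω` on `U` with `f`, `λ` of class C² and `λ` nowhere zero, then the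
one-form `η := λ⁻¹ • Dλ` satisfies `dω = ω ∧ η` and `dη = 0` on `U`; in particular the
Godbillon–Vey integrand `η ∧ dη` vanishes identically on `U`. -/
theorem godbillon_vey_integrand_vanishes
    {E : Type*} [NormedAddCommGroup E] [NormedSpace ℝ E]
    (U : Set E) (hU : IsOpen U)
    (ω : E → (E →L[ℝ] ℝ)) (hω : ContDiffOn ℝ 1 ω U)
    (f : E → ℝ) (hf : ContDiffOn ℝ 2 f U)
    (lam : E → ℝ) (hlam : ContDiffOn ℝ 2 lam U) (hlamne : ∀ x ∈ U, lam x ≠ 0)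
    (heuler : ∀ x ∈ U, fderiv ℝ f x = lam x • ω x)
    (η : E → (E →L[ℝ] ℝ)) (hη : ∀ x, η x = (lam x)⁻¹ • fderiv ℝ lam x) :
    ∀ x ∈ U,
      (∀ u v : E,
        (fderiv ℝ ω x u) v - (fderiv ℝ ω x v) u
          = ω x u * η x v - ω x v * η x u) ∧
      (∀ u v : E, (fderiv ℝ η x u) v - (fderiv ℝ η x v) u = 0) ∧
      (∀ u v w : E,
        η x u * ((fderiv ℝ η x v) w - (fderiv ℝ η x w) v)
          - η x v * ((fderiv ℝ η x u) w - (fderiv ℝ η x w) u)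
          + η x w * ((fderiv ℝ η x u) v - (fderiv ℝ η x v) u) = 0) :=
  godbillon_vey_integrand_vanishes_general U hU ω f hf lam hlam hlamne heuler η hη
end

section
/- Let E be a real normed vector space, U ⊆ E an open set and ω a C^∞ one-form on U. Then the following are equivalent: (a) there exists a C^∞ function λ : U → ℝ such that ω ∧ dλ = dω on U, i.e. for all x ∈ U and u, v ∈ E: ω(x)(u)·Dλ(x)(v) − ω(x)(v)·Dλ(x)(u) = dω(x)(u,v); (b) there exists a C^∞ function h : U → ℝ with h(x) > 0 for all x ∈ U such that the one-form h·ω is closed, i.e. d(hω) = 0 on U. (Moreover, if λ solves (a) then h := exp(λ) solves (b), and if h solves (b) then λ := log h solves (a).) -/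
private lemma dsmul_eval {E : Type*} [NormedAddCommGroup E] [NormedSpace ℝ E]
    {h : E → ℝ} {ω : E → (E →L[ℝ] ℝ)} {x : E}
    (hh : DifferentiableAt ℝ h x) (hω : DifferentiableAt ℝ ω x) (u v : E) :
    (fderiv ℝ (fun y => h y • ω y) x u) v - (fderiv ℝ (fun y => h y • ω y) x v) u
      = h x * ((fderiv ℝ ω x u) v - (fderiv ℝ ω x v) u)
        + (fderiv ℝ h x u * ω x v - fderiv ℝ h x v * ω x u) := by
  rw [fderiv_fun_smul hh hω]
  simp only [ContinuousLinearMap.add_apply, ContinuousLinearMap.smul_apply,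
    ContinuousLinearMap.smulRight_apply, smul_eq_mul]
  ring

/-- For a C^∞ one-form `ω` on an open set `U`, the equation `ω ∧ dλ = dω` has a global
C^∞ solution `λ` on `U` if and only if there is a positive C^∞ function `h` on `U` such
that `h • ω` is closed.  Moreover, if `λ` solves the equation then `h := exp λ` makes
`h • ω` closed, and if `h • ω` is closed with `h > 0` then `λ := log h` solves the
equation. -/
theorem euler_equation_iff_closed_multiple
    {E : Type*} [NormedAddCommGroup E] [NormedSpace ℝ E]
    (U : Set E) (hU : IsOpen U)
    (ω : E → (E →L[ℝ] ℝ)) (hω : ContDiffOn ℝ (⊤ : ℕ∞) ω U) :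
    ((∃ lam : E → ℝ, ContDiffOn ℝ (⊤ : ℕ∞) lam U ∧
        ∀ x ∈ U, ∀ u v : E,
          ω x u * fderiv ℝ lam x v - ω x v * fderiv ℝ lam x u
            = (fderiv ℝ ω x u) v - (fderiv ℝ ω x v) u) ↔
      (∃ h : E → ℝ, ContDiffOn ℝ (⊤ : ℕ∞) h U ∧ (∀ x ∈ U, 0 < h x) ∧
        ∀ x ∈ U, ∀ u v : E,
          (fderiv ℝ (fun y => h y • ω y) x u) v
            - (fderiv ℝ (fun y => h y • ω y) x v) u = 0))
    ∧
    (∀ lam : E → ℝ, ContDiffOn ℝ (⊤ : ℕ∞) lam U →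
      (∀ x ∈ U, ∀ u v : E,
          ω x u * fderiv ℝ lam x v - ω x v * fderiv ℝ lam x u
            = (fderiv ℝ ω x u) v - (fderiv ℝ ω x v) u) →
      (ContDiffOn ℝ (⊤ : ℕ∞) (fun y => Real.exp (lam y)) U ∧
       (∀ x ∈ U, 0 < Real.exp (lam x)) ∧
       ∀ x ∈ U, ∀ u v : E,
         (fderiv ℝ (fun y => Real.exp (lam y) • ω y) x u) v
           - (fderiv ℝ (fun y => Real.exp (lam y) • ω y) x v) u = 0))
    ∧
    (∀ h : E → ℝ, ContDiffOn ℝ (⊤ : ℕ∞) h U → (∀ x ∈ U, 0 < h x) →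
      (∀ x ∈ U, ∀ u v : E,
          (fderiv ℝ (fun y => h y • ω y) x u) v
            - (fderiv ℝ (fun y => h y • ω y) x v) u = 0) →
      (ContDiffOn ℝ (⊤ : ℕ∞) (fun y => Real.log (h y)) U ∧
       ∀ x ∈ U, ∀ u v : E,
         ω x u * fderiv ℝ (fun y => Real.log (h y)) x v
           - ω x v * fderiv ℝ (fun y => Real.log (h y)) x u
           = (fderiv ℝ ω x u) v - (fderiv ℝ ω x v) u)) := by
  have hωd : ∀ x ∈ U, DifferentiableAt ℝ ω x := fun x hx =>
    ((hω x hx).contDiffAt (hU.mem_nhds hx)).differentiableAt (by simp)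
  have fwd : ∀ lam : E → ℝ, ContDiffOn ℝ (⊤ : ℕ∞) lam U →
      (∀ x ∈ U, ∀ u v : E,
          ω x u * fderiv ℝ lam x v - ω x v * fderiv ℝ lam x u
            = (fderiv ℝ ω x u) v - (fderiv ℝ ω x v) u) →
      (ContDiffOn ℝ (⊤ : ℕ∞) (fun y => Real.exp (lam y)) U ∧
       (∀ x ∈ U, 0 < Real.exp (lam x)) ∧
       ∀ x ∈ U, ∀ u v : E,
         (fderiv ℝ (fun y => Real.exp (lam y) • ω y) x u) v
           - (fderiv ℝ (fun y => Real.exp (lam y) • ω y) x v) u = 0) := by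
    intro lam hlam heq
    have hld : ∀ x ∈ U, DifferentiableAt ℝ lam x := fun x hx =>
      ((hlam x hx).contDiffAt (hU.mem_nhds hx)).differentiableAt (by simp)
    refine ⟨Real.contDiff_exp.comp_contDiffOn hlam, fun x _ => Real.exp_pos _, ?_⟩
    intro x hx u v
    have hed : DifferentiableAt ℝ (fun y => Real.exp (lam y)) x :=
      (Real.differentiable_exp _).comp x (hld x hx)
    rw [dsmul_eval hed (hωd x hx), fderiv_exp (hld x hx)]
    simp only [ContinuousLinearMap.smul_apply, smul_eq_mul]
    rw [← heq x hx u v]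
    ring
  have bwd : ∀ h : E → ℝ, ContDiffOn ℝ (⊤ : ℕ∞) h U → (∀ x ∈ U, 0 < h x) →
      (∀ x ∈ U, ∀ u v : E,
          (fderiv ℝ (fun y => h y • ω y) x u) v
            - (fderiv ℝ (fun y => h y • ω y) x v) u = 0) →
      (ContDiffOn ℝ (⊤ : ℕ∞) (fun y => Real.log (h y)) U ∧
       ∀ x ∈ U, ∀ u v : E,
         ω x u * fderiv ℝ (fun y => Real.log (h y)) x v
           - ω x v * fderiv ℝ (fun y => Real.log (h y)) x u
           = (fderiv ℝ ω x u) v - (fderiv ℝ ω x v) u) := by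
    intro h hh hpos hcl
    have hhd : ∀ x ∈ U, DifferentiableAt ℝ h x := fun x hx =>
      ((hh x hx).contDiffAt (hU.mem_nhds hx)).differentiableAt (by simp)
    refine ⟨hh.log (fun x hx => (hpos x hx).ne'), ?_⟩
    intro x hx u v
    have hne : h x ≠ 0 := (hpos x hx).ne'
    rw [fderiv.log (hhd x hx) hne]
    have key := hcl x hx u v
    rw [dsmul_eval (hhd x hx) (hωd x hx)] at key
    simp only [ContinuousLinearMap.smul_apply, smul_eq_mul]
    have : fderiv ℝ h x u * ω x v - fderiv ℝ h x v * ω x u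
        = - (h x * ((fderiv ℝ ω x u) v - (fderiv ℝ ω x v) u)) := by linarith
    field_simp
    linarith [this]
  refine ⟨⟨?_, ?_⟩, fwd, bwd⟩
  · rintro ⟨lam, hlam, heq⟩
    exact ⟨fun y => Real.exp (lam y), fwd lam hlam heq⟩
  · rintro ⟨h, hh, hpos, hcl⟩
    exact ⟨fun y => Real.log (h y), bwd h hh hpos hcl⟩
end

section
/- On the open set U₀ := {(x,y,z) ∈ ℝ³ : x² + y² > 1/4}, define ρ(x,y,z) := √(x² + y²), let w_φ : (1/2, ∞) → ℝ be given by w_φ(ρ) := 4(ρ − 1/2)²(ρ − 1) for 1/2 < ρ < 1 and w_φ(ρ) := ρ − 1 for ρ ≥ 1, and define the C¹ one-form ω on U₀ by ω(x,y,z) := ρ·(x dx + y dy) + (w_φ(ρ)/ρ²)·(−y dx + x dy). Then Euler's multiplier does not exist in any neighbourhood of the cylinder {x² + y² = 1}: for every open set U with {(x,y,z) ∈ ℝ³ : x² + y² = 1} ⊆ U ⊆ U₀, there exist no C¹ function f : U → ℝ and no function λ : U → ℝ with λ(p) ≠ 0 for all p ∈ U such that Df(p) = λ(p) • ω(p) for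 all p ∈ U. -/
/-!
Along the horizontal circle `t ↦ (r cos t, r sin t, 0)` the form `ω` evaluates on the
velocity to `w_φ(r)`. If `Df = λ ω`, the derivative of `f` along that closed loop is
`λ · w_φ(r)`, which never vanishes for `r > 1`; by Rolle's theorem this is impossible for a
function returning to its initial value. By compactness of the unit circle, every open
neighbourhood of the cylinder contains such a circle with `r` slightly larger than `1`.
-/

/-- The profile function `w_φ` of the introductory example, defined for `ρ > 1/2`. -/
noncomputable def wPhi (ρ : ℝ) : ℝ :=
  if ρ < 1 then 4 * (ρ - 1 / 2) ^ 2 * (ρ - 1) else ρ - 1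

/-- The one-form `ω = w_ρ dρ + w_φ dφ + w_z dz` of the introductory example, written in
Cartesian coordinates on the region `ρ > 1/2` (where `w_ρ = ρ²`, `w_z = 0`):
`ω(x,y,z) = ρ·(x dx + y dy) + (w_φ(ρ)/ρ²)·(−y dx + x dy)` with `ρ = √(x² + y²)`. -/
noncomputable def ωCyl (p : Fin 3 → ℝ) : (Fin 3 → ℝ) →L[ℝ] ℝ :=
  (Real.sqrt (p 0 ^ 2 + p 1 ^ 2) * p 0
      - wPhi (Real.sqrt (p 0 ^ 2 + p 1 ^ 2)) * p 1 / (p 0 ^ 2 + p 1 ^ 2)) •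
    (ContinuousLinearMap.proj 0 : (Fin 3 → ℝ) →L[ℝ] ℝ)
  + (Real.sqrt (p 0 ^ 2 + p 1 ^ 2) * p 1
      + wPhi (Real.sqrt (p 0 ^ 2 + p 1 ^ 2)) * p 0 / (p 0 ^ 2 + p 1 ^ 2)) •
    (ContinuousLinearMap.proj 1 : (Fin 3 → ℝ) →L[ℝ] ℝ)

open Real Set

theorem hasDerivAt_ite_lt {p q : ℝ → ℝ} {a : ℝ} (hp : Differentiable ℝ p)
    (hq : Differentiable ℝ q) (h : p a = q a) (h' : deriv p a = deriv q a) (x : ℝ) :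
    HasDerivAt (fun x => if x < a then p x else q x)
      (if x < a then deriv p x else deriv q x) x := by
  rcases lt_trichotomy x a with hx | rfl | hx
  · rw [if_pos hx]
    refine (hp x).hasDerivAt.congr_of_eventuallyEq ?_
    filter_upwards [Iio_mem_nhds hx] with y hy
    rw [if_pos (mem_Iio.1 hy)]
  · rw [if_neg (lt_irrefl x)]
    have hle : HasDerivWithinAt (fun y => if y < x then p y else q y) (deriv q x) (Iic x) x :=
      h' ▸ (hp x).hasDerivAt.hasDerivWithinAt.congr
        (fun y hy => by rcases (mem_Iic.1 hy).lt_or_eq with hy | rfl <;> simp [*]) (by simp [h])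
    have hge : HasDerivWithinAt (fun y => if y < x then p y else q y) (deriv q x) (Ici x) x :=
      (hq x).hasDerivAt.hasDerivWithinAt.congr
        (fun y hy => by simp [not_lt.2 (mem_Ici.1 hy)]) (by simp)
    simpa [Iic_union_Ici, hasDerivWithinAt_univ] using hle.union hge
  · rw [if_neg hx.not_gt]
    refine (hq x).hasDerivAt.congr_of_eventuallyEq ?_
    filter_upwards [Ioi_mem_nhds hx] with y hy
    rw [if_neg (not_lt.2 (le_of_lt hy))]

theorem ContDiff.ite_lt {p q : ℝ → ℝ} {a : ℝ} (hp : ContDiff ℝ 1 p)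
    (hq : ContDiff ℝ 1 q) (h : p a = q a) (h' : deriv p a = deriv q a) :
    ContDiff ℝ 1 fun x => if x < a then p x else q x := by
  have hderiv := hasDerivAt_ite_lt (hp.differentiable one_ne_zero)
    (hq.differentiable one_ne_zero) h h'
  rw [contDiff_one_iff_deriv]
  refine ⟨fun x => (hderiv x).differentiableAt, ?_⟩
  rw [funext fun x => (hderiv x).deriv]
  have hflip : (fun x => if x < a then deriv p x else deriv q x) =
      fun x => if a ≤ x then deriv q x else deriv p x :=
    funext fun x => by by_cases hx : x < a <;> simp [hx, not_le.2, not_lt.1]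
  rw [hflip]
  exact Continuous.if_le (hq.continuous_deriv le_rfl) (hp.continuous_deriv le_rfl)
    continuous_const continuous_id fun x hx => by rw [← hx, h']

theorem contDiff_wPhi : ContDiff ℝ 1 wPhi := by
  refine ContDiff.ite_lt (by fun_prop) (by fun_prop) (by norm_num) ?_
  have hpoly : HasDerivAt (fun ρ : ℝ => 4 * (ρ - 1 / 2) ^ 2 * (ρ - 1)) 1 1 := by
    have hid := hasDerivAt_id' (1 : ℝ)
    refine ((((hid.sub_const (1 / 2)).fun_pow 2).const_mul 4).fun_mul
      (hid.sub_const 1)).congr_deriv ?_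
    norm_num
  rw [hpoly.deriv, ((hasDerivAt_id' (1 : ℝ)).sub_const 1).deriv]

theorem contDiffOn_ωCyl :
    ContDiffOn ℝ 1 ωCyl {p : Fin 3 → ℝ | 1 / 4 < p 0 ^ 2 + p 1 ^ 2} := by
  have hr2 : ∀ p ∈ {p : Fin 3 → ℝ | 1 / 4 < p 0 ^ 2 + p 1 ^ 2}, p 0 ^ 2 + p 1 ^ 2 ≠ 0 :=
    fun p hp => (lt_trans (by norm_num) hp).ne'
  have hρ : ContDiffOn ℝ 1 (fun p : Fin 3 → ℝ => √(p 0 ^ 2 + p 1 ^ 2))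
      {p | 1 / 4 < p 0 ^ 2 + p 1 ^ 2} :=
    ContDiffOn.sqrt (by fun_prop) hr2
  have hw := contDiff_wPhi.comp_contDiffOn hρ
  unfold ωCyl
  fun_prop (disch := assumption)

noncomputable def cylCircle (r t : ℝ) : Fin 3 → ℝ := ![r * cos t, r * sin t, 0]

theorem hasDerivAt_cylCircle (r t : ℝ) :
    HasDerivAt (cylCircle r) ![-(r * sin t), r * cos t, 0] t := by
  rw [hasDerivAt_pi]
  intro i
  fin_cases i
  · simpa [cylCircle, mul_comm] using (hasDerivAt_cos t).const_mul r
  · simpa [cylCircle, mul_comm] using (hasDerivAt_sin t).const_mul r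
  · simpa [cylCircle] using hasDerivAt_const t (0 : ℝ)

theorem cylCircle_two_pi (r : ℝ) : cylCircle r (2 * π) = cylCircle r 0 := by
  simp [cylCircle]

theorem dist_cylCircle_le (r s t : ℝ) : dist (cylCircle r t) (cylCircle s t) ≤ |r - s| := by
  refine (dist_pi_le_iff (abs_nonneg _)).2 fun i => ?_
  fin_cases i
  · simpa [cylCircle, Real.dist_eq, ← sub_mul, abs_mul] using
      mul_le_of_le_one_right (abs_nonneg (r - s)) (abs_cos_le_one t)
  · simpa [cylCircle, Real.dist_eq, ← sub_mul, abs_mul] using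
      mul_le_of_le_one_right (abs_nonneg (r - s)) (abs_sin_le_one t)
  · simp [cylCircle]

theorem ωCyl_cylCircle {r : ℝ} (hr : 0 < r) (t : ℝ) :
    ωCyl (cylCircle r t) ![-(r * sin t), r * cos t, 0] = wPhi r := by
  have hr2 : (r * cos t) ^ 2 + (r * sin t) ^ 2 = r ^ 2 := by
    linear_combination r ^ 2 * cos_sq_add_sin_sq t
  simp only [ωCyl, cylCircle, add_apply, smul_apply, ContinuousLinearMap.proj_apply, smul_eq_mul,
    Matrix.cons_val_zero, Matrix.cons_val_one, hr2, sqrt_sq hr.le]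
  field_simp
  linear_combination wPhi r * sin_sq_add_cos_sq t

theorem exists_one_lt_cylCircle_mem {U : Set (Fin 3 → ℝ)} (hU : IsOpen U)
    (hcyl : {p : Fin 3 → ℝ | p 0 ^ 2 + p 1 ^ 2 = 1} ⊆ U) :
    ∃ r, 1 < r ∧ ∀ t ∈ Icc 0 (2 * π), cylCircle r t ∈ U := by
  have hK : IsCompact (cylCircle 1 '' Icc 0 (2 * π)) :=
    isCompact_Icc.image (continuous_pi fun i => by fin_cases i <;> simp [cylCircle] <;> fun_prop)
  have hKU : cylCircle 1 '' Icc 0 (2 * π) ⊆ U := by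
    rintro _ ⟨t, -, rfl⟩
    exact hcyl (by simp [cylCircle])
  obtain ⟨ε, hε, hthick⟩ := hK.exists_thickening_subset_open hU hKU
  refine ⟨1 + ε / 2, by linarith, fun t ht => hthick ?_⟩
  refine Metric.mem_thickening_iff.2 ⟨cylCircle 1 t, mem_image_of_mem _ ht, ?_⟩
  calc dist (cylCircle (1 + ε / 2) t) (cylCircle 1 t)
      ≤ |1 + ε / 2 - 1| := dist_cylCircle_le _ _ _
    _ < ε := by rw [add_sub_cancel_left, abs_of_pos (half_pos hε)]; linarith

theorem exists_fderiv_apply_eq_zero_of_loop {E : Type*} [NormedAddCommGroup E]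
    [NormedSpace ℝ E] {f : E → ℝ} {γ γ' : ℝ → E} {a b : ℝ} (hab : a < b)
    (hγ : ∀ t ∈ Icc a b, HasDerivAt γ (γ' t) t)
    (hf : ∀ t ∈ Icc a b, DifferentiableAt ℝ f (γ t))
    (hloop : γ a = γ b) : ∃ t ∈ Ioo a b, fderiv ℝ f (γ t) (γ' t) = 0 := by
  have hfγ : ∀ t ∈ Icc a b, HasDerivAt (f ∘ γ) (fderiv ℝ f (γ t) (γ' t)) t :=
    fun t ht => (hf t ht).hasFDerivAt.comp_hasDerivAt t (hγ t ht)
  exact exists_hasDerivAt_eq_zero hab (fun t ht => (hfγ t ht).continuousAt.continuousWithinAt)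
    (congrArg f hloop) fun t ht => hfγ t (Ioo_subset_Icc_self ht)

/-- The one-form `ωCyl` is C¹ on `U₀ = {ρ > 1/2}`, but Euler's multiplier for it does
not exist in any neighbourhood of the cylinder `{x² + y² = 1}`. -/
theorem no_euler_multiplier_near_cylinder :
    ContDiffOn ℝ 1 ωCyl {p : Fin 3 → ℝ | 1 / 4 < p 0 ^ 2 + p 1 ^ 2} ∧
    ∀ U : Set (Fin 3 → ℝ), IsOpen U →
      {p : Fin 3 → ℝ | p 0 ^ 2 + p 1 ^ 2 = 1} ⊆ U →
      U ⊆ {p : Fin 3 → ℝ | 1 / 4 < p 0 ^ 2 + p 1 ^ 2} →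
      ¬ ∃ (f : (Fin 3 → ℝ) → ℝ) (lam : (Fin 3 → ℝ) → ℝ),
          ContDiffOn ℝ 1 f U ∧ (∀ p ∈ U, lam p ≠ 0) ∧
          ∀ p ∈ U, fderiv ℝ f p = lam p • ωCyl p := by
  refine ⟨contDiffOn_ωCyl, ?_⟩
  rintro U hU hcyl - ⟨f, lam, hf, hlam, hDf⟩
  obtain ⟨r, hr, hrU⟩ := exists_one_lt_cylCircle_mem hU hcyl
  obtain ⟨t, ht, hzero⟩ := exists_fderiv_apply_eq_zero_of_loop two_pi_pos
    (fun t _ => hasDerivAt_cylCircle r t)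
    (fun t ht => (hf.contDiffAt (hU.mem_nhds (hrU t ht))).differentiableAt one_ne_zero)
    (cylCircle_two_pi r).symm
  have htU := hrU t (Ioo_subset_Icc_self ht)
  rw [hDf _ htU, smul_apply, ωCyl_cylCircle (by linarith), smul_eq_mul] at hzero
  have hw : wPhi r ≠ 0 := by
    rw [wPhi, if_neg hr.not_gt]
    exact sub_ne_zero.2 hr.ne'
  exact mul_ne_zero (hlam _ htU) hw hzero
end
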